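/- arXiv:2306.16803 — 3 statements merged into one kernel-verified Lean document; each statement's English description precedes it below -/
import Mathlib

section
/- Let A_0 and X be random variables on a finite probability space with P(A_0 = a) = π(a) > 0 for all a in a finite set A, and let R = g(X) be a real-valued deterministic function of X. Define w_X(a, x) = P(A_0 = a | X = x)/π(a) - 1 and w_R(a, r) = P(A_0 = a | R = r)/π(a) - 1. Then for the estimators Ĝ_X = Σ_a c(a) w_X(a, X) g(X) and Ĝ_R = Σ_a c(a) w_R(a, R) g(X), where c : A → ℝ^n is any fixed vector-valued function with Σ_a c(a) = 0, we have E[Ĝ_X | R] = Ĝ_R almost surely, and consequently Cov(Ĝ_R) ⪯ Cov(Ĝ_X). -/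
/-!
Both estimators are conditional means of the single-sample estimator
`G₀ = ∑ a, (1{A₀ = a} / π a - 1) g(X) c a`: `Ĝ_X = E[G₀ | X]` and `Ĝ_R = E[G₀ | R]`.
As `R = g(X)` is a function of `X`, the tower property gives `E[Ĝ_X | R] = Ĝ_R`.
In each direction `v`, the law of total variance
`Var ⟨v, Ĝ_X⟩ = Var ⟨v, Ĝ_R⟩ + E[⟨v, Ĝ_X - Ĝ_R⟩²]` then gives the Loewner inequality.
-/

open Finset

attribute [local instance] Classical.propDecidable

noncomputable section

/-- Expectation on a finite weighted space. -/
def Ex {Ω : Type*} [Fintype Ω] (p : Ω → ℝ) (f : Ω → ℝ) : ℝ := ∑ ω, p ω * f ω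

/-- Probability of an event. -/
def Pr {Ω : Type*} [Fintype Ω] (p : Ω → ℝ) (φ : Ω → Prop) : ℝ :=
  ∑ ω ∈ Finset.univ.filter φ, p ω

/-- Conditional probability `P(φ | ψ)`. -/
def cPr {Ω : Type*} [Fintype Ω] (p : Ω → ℝ) (φ ψ : Ω → Prop) : ℝ :=
  Pr p (fun ω => φ ω ∧ ψ ω) / Pr p ψ

/-- Conditional expectation `E[f | ψ]`. -/
def cEx {Ω : Type*} [Fintype Ω] (p : Ω → ℝ) (f : Ω → ℝ) (ψ : Ω → Prop) : ℝ :=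
  (∑ ω ∈ Finset.univ.filter ψ, p ω * f ω) / Pr p ψ

/-- Covariance matrix `Cov(X) = E[(X - E[X])(X - E[X])ᵀ]`. -/
def covM {Ω : Type*} [Fintype Ω] (p : Ω → ℝ) {n : ℕ} (X : Ω → Fin n → ℝ) :
    Matrix (Fin n) (Fin n) ℝ :=
  Matrix.of fun i j =>
    Ex p fun ω => (X ω i - Ex p fun ω' => X ω' i) * (X ω j - Ex p fun ω' => X ω' j)

section ConditionalExpectation

variable {Ω : Type*} [Fintype Ω] (p : Ω → ℝ) (ψ : Ω → Prop)

theorem cEx_congr {f f' : Ω → ℝ} (h : ∀ ω, ψ ω → f ω = f' ω) : cEx p f ψ = cEx p f' ψ := by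
  unfold cEx
  congr 1
  exact sum_congr rfl fun ω hω => by rw [h ω (mem_filter.mp hω).2]

theorem cEx_sum {ι : Type*} (s : Finset ι) (f : ι → Ω → ℝ) :
    cEx p (fun ω => ∑ i ∈ s, f i ω) ψ = ∑ i ∈ s, cEx p (f i) ψ := by
  simp only [cEx, mul_sum, ← sum_div]
  rw [sum_comm]

theorem cEx_sub (f f' : Ω → ℝ) :
    cEx p (fun ω => f ω - f' ω) ψ = cEx p f ψ - cEx p f' ψ := by
  simp only [cEx, mul_sub, sum_sub_distrib, sub_div]

theorem cEx_mul_const (f : Ω → ℝ) (k : ℝ) :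
    cEx p (fun ω => f ω * k) ψ = cEx p f ψ * k := by
  simp only [cEx, ← mul_assoc, ← sum_mul, div_mul_eq_mul_div]

theorem cEx_const_mul (k : ℝ) (f : Ω → ℝ) :
    cEx p (fun ω => k * f ω) ψ = k * cEx p f ψ := by
  simpa only [mul_comm k] using cEx_mul_const p ψ f k

theorem cEx_div_const (f : Ω → ℝ) (k : ℝ) :
    cEx p (fun ω => f ω / k) ψ = cEx p f ψ / k := by
  simpa only [div_eq_mul_inv] using cEx_mul_const p ψ f k⁻¹

theorem cEx_const {ψ : Ω → Prop} (hψ : Pr p ψ ≠ 0) (k : ℝ) : cEx p (fun _ => k) ψ = k := by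
  rw [cEx, ← sum_mul, ← Pr, mul_div_cancel_left₀ k hψ]

theorem cPr_eq_cEx_indicator (φ : Ω → Prop) :
    cPr p φ ψ = cEx p (fun ω => if φ ω then 1 else 0) ψ := by
  simp only [cPr, cEx, Pr, mul_ite, mul_one, mul_zero, ← sum_filter, filter_filter, and_comm]

theorem Pr_mul_cEx (hp : ∀ ω, 0 ≤ p ω) (f : Ω → ℝ) :
    Pr p ψ * cEx p f ψ = ∑ ω ∈ univ.filter ψ, p ω * f ω := by
  by_cases hψ : Pr p ψ = 0
  · have hzero : ∀ ω ∈ univ.filter ψ, p ω = 0 :=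
      (sum_eq_zero_iff_of_nonneg fun ω _ => hp ω).mp hψ
    rw [hψ, zero_mul, sum_eq_zero fun ω hω => by rw [hzero ω hω, zero_mul]]
  · exact mul_div_cancel₀ _ hψ

end ConditionalExpectation

section Tower

variable {Ω χ : Type*} [Fintype Ω] {p : Ω → ℝ}

theorem sum_fiber_mul_cEx_fiber (hp : ∀ ω, 0 ≤ p ω) (X : Ω → χ) (x : χ) (f : Ω → ℝ) :
    ∑ ω ∈ univ.filter (fun ω => X ω = x), p ω * cEx p f (fun ω' => X ω' = X ω)
      = ∑ ω ∈ univ.filter (fun ω => X ω = x), p ω * f ω := by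
  calc ∑ ω ∈ univ.filter (fun ω => X ω = x), p ω * cEx p f (fun ω' => X ω' = X ω)
      = ∑ ω ∈ univ.filter (fun ω => X ω = x), p ω * cEx p f (fun ω' => X ω' = x) :=
        sum_congr rfl fun ω hω => by rw [(mem_filter.mp hω).2]
    _ = _ := by rw [← sum_mul, ← Pr, Pr_mul_cEx p _ hp]

theorem sum_filter_mul_cEx_fiber (hp : ∀ ω, 0 ≤ p ω) (X : Ω → χ) {ψ : Ω → Prop}
    (hψ : ∀ ω ω', X ω = X ω' → ψ ω → ψ ω') (f : Ω → ℝ) :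
    ∑ ω ∈ univ.filter ψ, p ω * cEx p f (fun ω' => X ω' = X ω)
      = ∑ ω ∈ univ.filter ψ, p ω * f ω := by
  have hfiber : ∀ x ∈ (univ.filter ψ).image X,
      (univ.filter ψ).filter (fun ω => X ω = x) = univ.filter (fun ω => X ω = x) := by
    intro x hx
    obtain ⟨ω₀, hω₀, rfl⟩ := mem_image.mp hx
    ext ω
    simp only [mem_filter, mem_univ, true_and, and_iff_right_iff_imp]
    exact fun h => hψ ω₀ ω h.symm (mem_filter.mp hω₀).2
  have hmaps : ∀ ω ∈ univ.filter ψ, X ω ∈ (univ.filter ψ).image X :=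
    fun ω hω => mem_image_of_mem X hω
  rw [← sum_fiberwise_of_maps_to hmaps, ← sum_fiberwise_of_maps_to hmaps]
  exact sum_congr rfl fun x hx => by rw [hfiber x hx, sum_fiber_mul_cEx_fiber hp]

theorem cEx_cEx_fiber (hp : ∀ ω, 0 ≤ p ω) (X : Ω → χ) {ψ : Ω → Prop}
    (hψ : ∀ ω ω', X ω = X ω' → ψ ω → ψ ω') (f : Ω → ℝ) :
    cEx p (fun ω => cEx p f (fun ω' => X ω' = X ω)) ψ = cEx p f ψ := by
  rw [cEx, sum_filter_mul_cEx_fiber hp X hψ, cEx]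

theorem Ex_mul_sub_cEx_fiber (hp : ∀ ω, 0 ≤ p ω) (R : Ω → χ) {u : Ω → ℝ}
    (hu : ∀ ω ω', R ω = R ω' → u ω = u ω') (f : Ω → ℝ) :
    Ex p (fun ω => u ω * (f ω - cEx p f (fun ω' => R ω' = R ω))) = 0 := by
  have hpull : ∀ ω, u ω * cEx p f (fun ω' => R ω' = R ω)
      = cEx p (fun ω' => u ω' * f ω') (fun ω' => R ω' = R ω) := fun ω => by
    rw [← cEx_const_mul]
    exact cEx_congr p _ fun ω' h => by rw [hu ω' ω h]
  have htower := sum_filter_mul_cEx_fiber hp R (ψ := fun _ => True) (fun _ _ _ h => h)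
    (fun ω => u ω * f ω)
  simp only [filter_true] at htower
  simp only [Ex, mul_sub, hpull, sum_sub_distrib, htower, sub_self]

end Tower

section Variance

open scoped Matrix

variable {Ω β : Type*} [Fintype Ω] {p : Ω → ℝ}

theorem Ex_sq_sub_Ex_le_of_cEx (hp : ∀ ω, 0 ≤ p ω) (R : Ω → β) {F H : Ω → ℝ}
    (hH : ∀ ω, H ω = cEx p F (fun ω' => R ω' = R ω)) :
    Ex p (fun ω => (H ω - Ex p H) ^ 2) ≤ Ex p (fun ω => (F ω - Ex p F) ^ 2) := by
  have hHR : ∀ ω ω', R ω = R ω' → H ω = H ω' := fun ω ω' h => by simp only [hH, h]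
  have horth : ∀ u : Ω → ℝ, (∀ ω ω', R ω = R ω' → u ω = u ω') →
      Ex p (fun ω => u ω * (F ω - H ω)) = 0 := fun u hu => by
    simpa only [← hH] using Ex_mul_sub_cEx_fiber hp R hu F
  have hmean : Ex p H = Ex p F := by
    have h := horth (fun _ => 1) fun _ _ _ => rfl
    simp only [Ex, one_mul, mul_sub, sum_sub_distrib, sub_eq_zero] at h
    exact h.symm
  have hcross := horth (fun ω => 2 * (H ω - Ex p F)) fun ω ω' h => by rw [hHR ω ω' h]
  calc Ex p (fun ω => (H ω - Ex p H) ^ 2)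
      ≤ Ex p (fun ω => (H ω - Ex p F) ^ 2) + Ex p (fun ω => (F ω - H ω) ^ 2) := by
        rw [hmean, le_add_iff_nonneg_right]
        exact sum_nonneg fun ω _ => mul_nonneg (hp ω) (sq_nonneg _)
    _ = Ex p (fun ω => (F ω - Ex p F) ^ 2) := by
        rw [eq_comm, ← sub_eq_zero, ← hcross]
        simp only [Ex, ← sum_add_distrib, ← sum_sub_distrib]
        exact sum_congr rfl fun ω _ => by ring

theorem dotProduct_covM_mulVec {n : ℕ} (Y : Ω → Fin n → ℝ) (v : Fin n → ℝ) :
    v ⬝ᵥ (covM p Y *ᵥ v) = Ex p (fun ω => (v ⬝ᵥ Y ω - Ex p (fun ω' => v ⬝ᵥ Y ω')) ^ 2) := by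
  have hcenter : ∀ ω, v ⬝ᵥ Y ω - Ex p (fun ω' => v ⬝ᵥ Y ω')
      = ∑ i, v i * (Y ω i - Ex p (fun ω' => Y ω' i)) := fun ω => by
    simp only [dotProduct, Ex, mul_sum, mul_sub, sum_sub_distrib]
    rw [sum_comm (γ := Fin n)]
    simp only [mul_left_comm]
  simp only [hcenter]
  simp only [sq, dotProduct, Matrix.mulVec, covM, Matrix.of_apply, Ex, mul_sum, sum_mul]
  rw [sum_comm (γ := Ω)]
  refine sum_congr rfl fun i _ => ?_
  rw [sum_comm]
  exact sum_congr rfl fun ω _ => sum_congr rfl fun j _ => by ring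

theorem dotProduct_covM_sub_mulVec_nonneg_of_cEx (hp : ∀ ω, 0 ≤ p ω) (R : Ω → β) {n : ℕ}
    {Y Z : Ω → Fin n → ℝ}
    (hZ : ∀ ω i, cEx p (fun ω' => Y ω' i) (fun ω' => R ω' = R ω) = Z ω i) (v : Fin n → ℝ) :
    0 ≤ v ⬝ᵥ ((covM p Y - covM p Z) *ᵥ v) := by
  rw [Matrix.sub_mulVec, dotProduct_sub, dotProduct_covM_mulVec, dotProduct_covM_mulVec,
    sub_nonneg]
  refine Ex_sq_sub_Ex_le_of_cEx hp R fun ω => ?_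
  simp only [dotProduct, cEx_sum, cEx_const_mul, hZ]

end Variance

theorem Pr_fiber_pos {Ω β : Type*} [Fintype Ω] {p : Ω → ℝ} (hp : ∀ ω, 0 < p ω) (R : Ω → β)
    (ω : Ω) : 0 < Pr p (fun ω' => R ω' = R ω) :=
  sum_pos (fun ω _ => hp ω) ⟨ω, mem_filter.mpr ⟨mem_univ ω, rfl⟩⟩

def sampleEstimator {Ω α : Type*} [Fintype α] (A : Ω → α) (π : α → ℝ) (m : Ω → ℝ)
    (d : α → ℝ) (ω : Ω) : ℝ :=
  ∑ a, ((if A ω = a then 1 else 0) / π a - 1) * m ω * d a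

theorem cEx_sampleEstimator {Ω α : Type*} [Fintype Ω] [Fintype α] (p : Ω → ℝ)
    (A : Ω → α) (π : α → ℝ) {ψ : Ω → Prop} (hψ : Pr p ψ ≠ 0) {m : Ω → ℝ} {r : ℝ}
    (hm : ∀ ω, ψ ω → m ω = r) (d : α → ℝ) :
    cEx p (sampleEstimator A π m d) ψ
      = ∑ a, (cPr p (fun ω => A ω = a) ψ / π a - 1) * r * d a := by
  rw [cEx_congr p ψ (f' := fun ω => ∑ a, ((if A ω = a then 1 else 0) / π a - 1) * (r * d a))
    fun ω hω => by simp only [sampleEstimator, hm ω hω, mul_assoc]]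
  simp only [cEx_sum, cEx_mul_const, cEx_sub, cEx_div_const, cEx_const p hψ,
    cPr_eq_cEx_indicator, mul_assoc]

theorem reward_coefficients_reduce_variance_general
    {Ω α χ : Type*} [Fintype Ω] [Fintype α] {n : ℕ}
    (p : Ω → ℝ) (hp : ∀ ω, 0 < p ω)
    (A0 : Ω → α) (X : Ω → χ) (g : χ → ℝ)
    (pol : α → ℝ)
    (c : α → Fin n → ℝ) :
    letI wX : α → χ → ℝ := fun a x =>
      cPr p (fun ω => A0 ω = a) (fun ω => X ω = x) / pol a - 1
    letI wR : α → ℝ → ℝ := fun a r =>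
      cPr p (fun ω => A0 ω = a) (fun ω => g (X ω) = r) / pol a - 1
    letI GX : Ω → Fin n → ℝ := fun ω => ∑ a, (wX a (X ω) * g (X ω)) • c a
    letI GR : Ω → Fin n → ℝ := fun ω => ∑ a, (wR a (g (X ω)) * g (X ω)) • c a
    (∀ ω i, cEx p (fun ω' => GX ω' i) (fun ω' => g (X ω') = g (X ω)) = GR ω i)
    ∧ ∀ v : Fin n → ℝ,
        0 ≤ dotProduct v ((covM p GX - covM p GR).mulVec v) := by
  set GX : Ω → Fin n → ℝ := fun ω =>
    ∑ a, ((cPr p (fun ω' => A0 ω' = a) (fun ω' => X ω' = X ω) / pol a - 1) * g (X ω)) • c a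
  set GR : Ω → Fin n → ℝ := fun ω =>
    ∑ a, ((cPr p (fun ω' => A0 ω' = a) (fun ω' => g (X ω') = g (X ω)) / pol a - 1) * g (X ω)) • c a
  have hp₀ : ∀ ω, 0 ≤ p ω := fun ω => (hp ω).le
  have hGX (ω : Ω) (i : Fin n) : GX ω i
      = cEx p (sampleEstimator A0 pol (fun ω => g (X ω)) (c · i)) (fun ω' => X ω' = X ω) := by
    rw [cEx_sampleEstimator p A0 pol (Pr_fiber_pos hp X ω).ne' fun ω' h => by rw [h]]
    simp only [GX, Finset.sum_apply, Pi.smul_apply, smul_eq_mul]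
  have hGR (ω : Ω) (i : Fin n) : GR ω i
      = cEx p (sampleEstimator A0 pol (fun ω => g (X ω)) (c · i))
          (fun ω' => g (X ω') = g (X ω)) := by
    rw [cEx_sampleEstimator p A0 pol (Pr_fiber_pos hp (fun ω => g (X ω)) ω).ne' fun ω' h => h]
    simp only [GR, Finset.sum_apply, Pi.smul_apply, smul_eq_mul]
  have hcond (ω : Ω) (i : Fin n) :
      cEx p (fun ω' => GX ω' i) (fun ω' => g (X ω') = g (X ω)) = GR ω i := by
    simp only [hGX, hGR]
    exact cEx_cEx_fiber hp₀ X (fun ω₁ ω₂ h h₁ => h ▸ h₁) _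
  exact ⟨hcond, dotProduct_covM_sub_mulVec_nonneg_of_cEx hp₀ (fun ω => g (X ω)) hcond⟩

/-- With `R = g(X)` a deterministic function of `X`, the reward-based
contribution estimator is the conditional expectation of the `X`-based one given `R`,
and hence has smaller covariance in the Loewner order. -/
theorem reward_coefficients_reduce_variance
    {Ω α χ : Type*} [Fintype Ω] [Fintype α] [Fintype χ] {n : ℕ}
    (p : Ω → ℝ) (hp : ∀ ω, 0 < p ω) (hsum : ∑ ω, p ω = 1)
    (A0 : Ω → α) (X : Ω → χ) (g : χ → ℝ)
    (pol : α → ℝ) (hpol : ∀ a, pol a = Pr p (fun ω => A0 ω = a))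
    (hpos : ∀ a, 0 < pol a)
    (c : α → Fin n → ℝ) (hc : ∑ a, c a = 0) :
    letI wX : α → χ → ℝ := fun a x =>
      cPr p (fun ω => A0 ω = a) (fun ω => X ω = x) / pol a - 1
    letI wR : α → ℝ → ℝ := fun a r =>
      cPr p (fun ω => A0 ω = a) (fun ω => g (X ω) = r) / pol a - 1
    letI GX : Ω → Fin n → ℝ := fun ω => ∑ a, (wX a (X ω) * g (X ω)) • c a
    letI GR : Ω → Fin n → ℝ := fun ω => ∑ a, (wR a (g (X ω)) * g (X ω)) • c a
    (∀ ω i, cEx p (fun ω' => GX ω' i) (fun ω' => g (X ω') = g (X ω)) = GR ω i)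
    ∧ ∀ v : Fin n → ℝ,
        0 ≤ dotProduct v ((covM p GX - covM p GR).mulVec v) :=
  reward_coefficients_reduce_variance_general p hp A0 X g pol c

end
end

section
/- Let O^π(u, s) = Σ_{k=1}^{T} P^π(U_k = u | S_0 = s) and O^π(u, s, a) = Σ_{k=1}^{T} P^π(U_k = u | S_0 = s, A_0 = a) be the expected number of occurrences of rewarding outcome u in a finite-horizon MDP, where U_k is a deterministic function of S_k. Then ∇_θ O^π(u, s) = Σ_{l=0}^{T-1} Σ_{s'} P^π(S_l = s' | S_0 = s) Σ_{a∈A} ∇_θ π(a | s') O^π_{T-l}(u, s', a), i.e., the gradient of the occupancy decomposes as a sum over visited states of the policy gradient weighted by the action-conditioned occupancy from that state. -/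
open Finset

attribute [local instance] Classical.propDecidable

noncomputable section

variable {S A υ : Type*}

/-- `P^π(S_k = s' | S_0 = s, A_0 = a)` for the kernel `P` and policy `q`. -/
def stepProbA [Fintype S] [Fintype A] (P : S → A → S → ℝ) (q : S → A → ℝ) :
    ℕ → S → A → S → ℝ
  | 0, s, _, s' => if s' = s then 1 else 0
  | k + 1, s, a, s' =>
      ∑ s'' : S, P s a s'' * ∑ a'' : A, q s'' a'' * stepProbA P q k s'' a'' s'

/-- `P^π(S_k = s' | S_0 = s)` (actions marginalized under the policy `q`). -/
def stepProbS [Fintype S] [Fintype A] (P : S → A → S → ℝ) (q : S → A → ℝ) :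
    ℕ → S → S → ℝ
  | 0, s, s' => if s' = s then 1 else 0
  | k + 1, s, s' =>
      ∑ a : A, q s a * ∑ s'' : S, P s a s'' * stepProbS P q k s'' s'

/-- Action-conditioned occupancy `O^π_t(u, s, a) = ∑_{k=1}^t P^π(U_k = u | S_0 = s, A_0 = a)`
where `U_k = f(S_k)`. -/
def occA [Fintype S] [Fintype A] (P : S → A → S → ℝ) (q : S → A → ℝ) (f : S → υ)
    (t : ℕ) (u : υ) (s : S) (a : A) : ℝ :=
  ∑ k ∈ Finset.Icc 1 t, ∑ s' : S,
    if f s' = u then stepProbA P q k s a s' else 0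

/-- Occupancy `O^π_t(u, s) = ∑_{k=1}^t P^π(U_k = u | S_0 = s)`. -/
def occS [Fintype S] [Fintype A] (P : S → A → S → ℝ) (q : S → A → ℝ) (f : S → υ)
    (t : ℕ) (u : υ) (s : S) : ℝ :=
  ∑ k ∈ Finset.Icc 1 t, ∑ s' : S,
    if f s' = u then stepProbS P q k s s' else 0

/-!
Conditioning on the first action and the next state gives the Bellman recursion
`O_{t+1}(u, s) = ∑_a π(a|s) O_{t+1}(u, s, a)` with
`O_{t+1}(u, s, a) = ∑_{s''} p(s''|s,a) (1[f s'' = u] + O_t(u, s''))`.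
By the product rule,
`∇O_{t+1}(u, s) = ∑_a ∇π(a|s) O_{t+1}(u, s, a) + ∑_a π(a|s) ∑_{s''} p(s''|s,a) ∇O_t(u, s'')`,
and unrolling this recursion by induction on the horizon produces the sum over the time `l`
and the state `s'` visited at that time.
-/

lemma sum_Icc_one_eq_sum_range {M : Type*} [AddCommMonoid M] (n : ℕ) (F : ℕ → M) :
    ∑ i ∈ Icc 1 n, F i = ∑ i ∈ range n, F (i + 1) := by
  rw [← Ico_add_one_right_eq_Icc, sum_Ico_eq_sum_range]
  simp only [add_tsub_cancel_right, add_comm]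

section Occupancy

variable [Fintype S] [Fintype A] (P : S → A → S → ℝ) (q : S → A → ℝ)

lemma stepProbS_eq_sum_stepProbA (hq : ∀ s, ∑ a, q s a = 1) (k : ℕ) (s s' : S) :
    stepProbS P q k s s' = ∑ a, q s a * stepProbA P q k s a s' := by
  induction k generalizing s with
  | zero => simp only [stepProbS, stepProbA, ← sum_mul, hq, one_mul]
  | succ k ih => simp only [stepProbS, stepProbA, ih]

lemma stepProbA_succ (hq : ∀ s, ∑ a, q s a = 1) (k : ℕ) (s : S) (a : A) (s' : S) :
    stepProbA P q (k + 1) s a s' = ∑ s'', P s a s'' * stepProbS P q k s'' s' := by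
  simp only [stepProbA, stepProbS_eq_sum_stepProbA P q hq]

lemma sum_stepProbS_zero_mul (s : S) (v : S → ℝ) :
    ∑ s', stepProbS P q 0 s s' * v s' = v s := by
  simp [stepProbS]

lemma sum_stepProbS_succ_mul (k : ℕ) (s : S) (v : S → ℝ) :
    ∑ s', stepProbS P q (k + 1) s s' * v s'
      = ∑ a, q s a * ∑ s'', P s a s'' * ∑ s', stepProbS P q k s'' s' * v s' := by
  simp only [stepProbS, sum_mul, mul_sum, mul_assoc]
  rw [sum_comm]
  exact sum_congr rfl fun a _ => sum_comm

lemma sum_range_succ_sum_stepProbS_mul (φ : ℕ → S → ℝ) (T : ℕ) (s : S) :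
    ∑ l ∈ range (T + 1), ∑ s', stepProbS P q l s s' * φ (T + 1 - l) s'
      = φ (T + 1) s + ∑ a, q s a * ∑ s'', P s a s'' *
          ∑ l ∈ range T, ∑ s', stepProbS P q l s'' s' * φ (T - l) s' := by
  rw [sum_range_succ', sum_stepProbS_zero_mul, add_comm]
  simp only [Nat.add_sub_add_right, Nat.sub_zero, sum_stepProbS_succ_mul, mul_sum]
  rw [sum_comm]
  exact congrArg _ (sum_congr rfl fun a _ => sum_comm)

variable (f : S → υ) (u : υ)

lemma occS_eq_sum_occA (hq : ∀ s, ∑ a, q s a = 1) (t : ℕ) (s : S) :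
    occS P q f t u s = ∑ a, q s a * occA P q f t u s a := by
  simp only [occS, occA, stepProbS_eq_sum_stepProbA P q hq, ite_sum_zero, mul_sum, mul_ite,
    mul_zero]
  rw [eq_comm, sum_comm]
  exact sum_congr rfl fun k _ => sum_comm

lemma sum_ite_stepProbA_succ (hq : ∀ s, ∑ a, q s a = 1) (k : ℕ) (s : S) (a : A) :
    ∑ s', (if f s' = u then stepProbA P q (k + 1) s a s' else 0)
      = ∑ s'', P s a s'' * ∑ s', (if f s' = u then stepProbS P q k s'' s' else 0) := by
  simp only [stepProbA_succ P q hq, ite_sum_zero, mul_sum, mul_ite, mul_zero]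
  exact sum_comm

lemma occA_succ (hq : ∀ s, ∑ a, q s a = 1) (t : ℕ) (s : S) (a : A) :
    occA P q f (t + 1) u s a
      = ∑ s'', P s a s'' * ((if f s'' = u then 1 else 0) + occS P q f t u s'') := by
  have hzero (s'' : S) : ∑ s', (if f s' = u then stepProbS P q 0 s'' s' else 0)
      = if f s'' = u then 1 else 0 := by
    rw [sum_eq_single s''] <;> simp +contextual [stepProbS]
  simp only [occA, occS, sum_Icc_one_eq_sum_range, sum_ite_stepProbA_succ P q f u hq]
  rw [sum_comm]
  simp only [← mul_sum, sum_range_succ', hzero, add_comm]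

lemma occS_succ (hq : ∀ s, ∑ a, q s a = 1) (t : ℕ) (s : S) :
    occS P q f (t + 1) u s = ∑ a, q s a *
      ∑ s'', P s a s'' * ((if f s'' = u then 1 else 0) + occS P q f t u s'') := by
  simp only [occS_eq_sum_occA P q f u hq, occA_succ P q f u hq]

end Occupancy

theorem occupancy_policy_gradient_general
    [Fintype S] [Fintype A]
    (P : S → A → S → ℝ)
    (f : S → υ)
    (q : ℝ → S → A → ℝ) (g : S → A → ℝ) (θ₀ : ℝ)
    (hqs : ∀ θ s, ∑ a, q θ s a = 1)
    (hd : ∀ s a, HasDerivAt (fun θ => q θ s a) (g s a) θ₀)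
    (T : ℕ) (u : υ) (s : S) :
    HasDerivAt (fun θ => occS P (q θ) f T u s)
      (∑ l ∈ Finset.range T, ∑ s' : S,
        stepProbS P (q θ₀) l s s' *
          ∑ a : A, g s' a * occA P (q θ₀) f (T - l) u s' a) θ₀ := by
  induction T generalizing s with
  | zero => simpa [occS] using hasDerivAt_const θ₀ (0 : ℝ)
  | succ T ih =>
    rw [sum_range_succ_sum_stepProbS_mul P (q θ₀)
      fun t s' => ∑ a, g s' a * occA P (q θ₀) f t u s' a]
    simp only [occS_succ P _ f u (hqs _), occA_succ P _ f u (hqs θ₀), ← sum_add_distrib]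
    refine HasDerivAt.fun_sum fun a _ => (hd s a).mul ?_
    simpa using HasDerivAt.fun_sum fun s'' _ => ((ih s'').const_add _).const_mul (P s a s'')

/-- Policy-gradient theorem for occupancy measures: the gradient of the
occupancy `O^π_T(u, s)` with respect to the policy parameter decomposes as
`∑_{l=0}^{T-1} ∑_{s'} P^π(S_l = s' | S_0 = s) ∑_a ∇_θ π(a|s') O^π_{T-l}(u, s', a)`. -/
theorem occupancy_policy_gradient
    [Fintype S] [Fintype A]
    (P : S → A → S → ℝ) (hPn : ∀ s a s', 0 ≤ P s a s') (hPs : ∀ s a, ∑ s', P s a s' = 1)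
    (f : S → υ)
    (q : ℝ → S → A → ℝ) (g : S → A → ℝ) (θ₀ : ℝ)
    (hqn : ∀ θ s a, 0 ≤ q θ s a) (hqs : ∀ θ s, ∑ a, q θ s a = 1)
    (hd : ∀ s a, HasDerivAt (fun θ => q θ s a) (g s a) θ₀)
    (T : ℕ) (u : υ) (s : S) :
    HasDerivAt (fun θ => occS P (q θ) f T u s)
      (∑ l ∈ Finset.range T, ∑ s' : S,
        stepProbS P (q θ₀) l s s' *
          ∑ a : A, g s' a * occA P (q θ₀) f (T - l) u s' a) θ₀ :=
  occupancy_policy_gradient_general P f q g θ₀ hqs hd T u s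

end
end

section
/- Consider a finite MDP with discount γ ∈ (0,1), finite action set A, policy π(a|s) > 0, rewarding-outcome encoding U fully predictive of the reward with r(u) = E[R | U = u], and n ≥ 2. Define w_{n,γ}(s,a,u) = [Σ_{k=1}^{n-1} γ^k P^π(U_k=u | s,a)] / [Σ_{k=1}^{n-1} γ^k P^π(U_k=u | s)] - 1 and w_n(s,a,s') = P^π(S_n=s' | s,a)/P^π(S_n=s' | s) - 1 (defined when denominators are positive). Then the advantage satisfies A^π(s,a) = r(s,a) - Σ_{a'} π(a'|s) r(s,a') + E_{T∼τ(s,π)}[Σ_{k=1}^{n-1} γ^k w_{n,γ}(s,a,U_k) R_k + γ^n w_n(s,a,S_n) V^π(S_n)]. -/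
/-!
After `n` steps, `Q^π(s,a) = r(s,a) + Σ_{k=1}^{n-1} γ^k E[R_k | s,a] + γ^n E[V^π(S_n) | s,a]`
(the tail of the discounted series is re-indexed through the Chapman–Kolmogorov identity for
`jointDist`), and `V^π(s)` is the `π(·|s)`-average of the same three terms. Each resulting
difference `E[g | s,a] - Σ_{a'} π(a'|s) E[g | s,a']` is an expectation under the mixture
`Σ_{a'} π(a'|s) P(· | s,a')` reweighted by `P(· | s,a) / mixture - 1`; since `π(a|s) > 0`, the
support of `P(· | s,a)` lies inside that of the mixture, so nothing is lost where the ratio is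
the junk value `x / 0 = 0`. For the reward terms the reweighting is done on the outcome `U_k`,
which is possible because `U` is fully predictive: `E[R_k | s,a] = Σ_u P(U_k = u | s,a) r(u)`.
-/

open Finset

attribute [local instance] Classical.propDecidable

noncomputable section

variable {S A R : Type*}

/-- Joint distribution of `(S_k, A_k)` given `S_0 = s, A_0 = a`, under transition kernel
`P` and policy `pol`. -/
def jointDist [Fintype S] [Fintype A] (P : S → A → S → ℝ) (pol : S → A → ℝ) :
    ℕ → S → A → S → A → ℝ
  | 0, s, a, s', a' => if s' = s ∧ a' = a then 1 else 0
  | k + 1, s, a, s', a' =>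
      (∑ s₂ : S, ∑ a₂ : A, jointDist P pol k s a s₂ a₂ * P s₂ a₂ s') * pol s' a'

/-- Expected immediate reward `r(s,a)`, where `pr` is the reward kernel over the finite
reward-value type `R` with values `ρ`. -/
def rexp [Fintype R] (pr : S → A → R → ℝ) (ρ : R → ℝ) (s : S) (a : A) : ℝ :=
  ∑ x : R, pr s a x * ρ x

/-- Discounted action-value function `Q^π(s,a) = ∑_{k≥0} γ^k E[R_k | S_0 = s, A_0 = a]`. -/
def Qval [Fintype S] [Fintype A] [Fintype R] (P : S → A → S → ℝ) (pol : S → A → ℝ)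
    (pr : S → A → R → ℝ) (ρ : R → ℝ) (γ : ℝ) (s : S) (a : A) : ℝ :=
  ∑' k : ℕ, γ ^ k * ∑ s' : S, ∑ a' : A, jointDist P pol k s a s' a' * rexp pr ρ s' a'

/-- Discounted value function `V^π(s) = ∑_a π(a|s) Q^π(s,a)`. -/
def Vval [Fintype S] [Fintype A] [Fintype R] (P : S → A → S → ℝ) (pol : S → A → ℝ)
    (pr : S → A → R → ℝ) (ρ : R → ℝ) (γ : ℝ) (s : S) : ℝ :=
  ∑ a : A, pol s a * Qval P pol pr ρ γ s a

/-- `P^π(S_k = s' | S_0 = s, A_0 = a)`. -/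
def stateDist [Fintype S] [Fintype A] (P : S → A → S → ℝ) (pol : S → A → ℝ)
    (k : ℕ) (s : S) (a : A) (s' : S) : ℝ :=
  ∑ a' : A, jointDist P pol k s a s' a'

/-- `P^π(U_k = u | S_0 = s, A_0 = a)` where `U_k = f(S_k, A_k, R_k)`. -/
def outcomeDist {υ : Type*} [Fintype S] [Fintype A] [Fintype R]
    (P : S → A → S → ℝ) (pol : S → A → ℝ) (pr : S → A → R → ℝ) (f : S → A → R → υ)
    (k : ℕ) (s : S) (a : A) (u : υ) : ℝ :=
  ∑ s' : S, ∑ a' : A, ∑ x : R,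
    if f s' a' x = u then jointDist P pol k s a s' a' * pr s' a' x else 0

theorem sum_mul_sum_mul_div_sub_one_mul {ι κ : Type*} {s : Finset κ} {t : Finset ι}
    {π : κ → ℝ} {p : κ → ι → ℝ} {m : ι → ℝ} (h : ι → ℝ) {a : κ} (ha : a ∈ s)
    (hπa : 0 < π a) (hπ : ∀ j ∈ s, 0 ≤ π j) (hp : ∀ j ∈ s, ∀ i ∈ t, 0 ≤ p j i)
    (hm : ∀ i ∈ t, ∑ j ∈ s, π j * p j i = m i) :
    ∑ j ∈ s, π j * ∑ i ∈ t, p j i * ((p a i / m i - 1) * h i)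
      = ∑ i ∈ t, p a i * h i - ∑ j ∈ s, π j * ∑ i ∈ t, p j i * h i := by
  simp only [mul_sum]
  rw [sum_comm, sum_comm (s := s), ← sum_sub_distrib]
  refine sum_congr rfl fun i hi => ?_
  have hmix (c : ℝ) : ∑ j ∈ s, π j * (p j i * c) = m i * c := by
    rw [← hm i hi, sum_mul]; exact sum_congr rfl fun j _ => by ring
  rw [hmix, hmix]
  rcases eq_or_ne (m i) 0 with h0 | h0
  · -- the support of `p a` lies in that of the mixture `m`
    have hpa : p a i = 0 := by
      rw [← hm i hi, sum_eq_zero_iff_of_nonneg fun j hj => mul_nonneg (hπ j hj) (hp j hj i hi)]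
        at h0
      exact (mul_eq_zero.mp (h0 a ha)).resolve_left hπa.ne'
    simp [h0, hpa]
  · field_simp

theorem sum_sum_sum_sum_comm {ι κ ι' κ' M : Type*} [AddCommMonoid M] (s : Finset ι)
    (t : Finset κ) (s' : Finset ι') (t' : Finset κ') (g : ι → κ → ι' → κ' → M) :
    ∑ i ∈ s, ∑ j ∈ t, ∑ i' ∈ s', ∑ j' ∈ t', g i j i' j'
      = ∑ i' ∈ s', ∑ j' ∈ t', ∑ i ∈ s, ∑ j ∈ t, g i j i' j' := by
  simpa only [sum_product, sum_product'] using
    sum_comm (s := s ×ˢ t) (t := s' ×ˢ t') (f := fun x y => g x.1 x.2 y.1 y.2)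

section Kernel

variable [Fintype S] [Fintype A] {P : S → A → S → ℝ} {pol : S → A → ℝ}

theorem jointDist_nonneg (hP₀ : ∀ s a s', 0 ≤ P s a s') (hpol₀ : ∀ s a, 0 ≤ pol s a) :
    ∀ k s a s' a', 0 ≤ jointDist P pol k s a s' a'
  | 0, s, a, s', a' => by rw [jointDist]; split_ifs <;> norm_num
  | k + 1, s, a, s', a' => by
    rw [jointDist]
    exact mul_nonneg (sum_nonneg fun _ _ => sum_nonneg fun _ _ =>
      mul_nonneg (jointDist_nonneg hP₀ hpol₀ ..) (hP₀ ..)) (hpol₀ ..)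

theorem stateDist_nonneg (hP₀ : ∀ s a s', 0 ≤ P s a s') (hpol₀ : ∀ s a, 0 ≤ pol s a)
    (k : ℕ) (s : S) (a : A) (s' : S) : 0 ≤ stateDist P pol k s a s' :=
  sum_nonneg fun _ _ => jointDist_nonneg hP₀ hpol₀ ..

theorem sum_jointDist (hP₁ : ∀ s a, ∑ s', P s a s' = 1) (hpol₁ : ∀ s, ∑ a, pol s a = 1) :
    ∀ k s a, ∑ s', ∑ a', jointDist P pol k s a s' a' = 1
  | 0, s, a => by simp [jointDist, ite_and]
  | k + 1, s, a => by
    simp only [jointDist, ← mul_sum, hpol₁, mul_one]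
    rw [sum_comm]
    refine (sum_congr rfl fun s₂ _ => ?_).trans (sum_jointDist hP₁ hpol₁ k s a)
    rw [sum_comm]
    simp only [← mul_sum, hP₁, mul_one]

theorem jointDist_add (m : ℕ) :
    ∀ j s a s' a', jointDist P pol (m + j) s a s' a'
      = ∑ s₂, ∑ a₂, jointDist P pol m s a s₂ a₂ * jointDist P pol j s₂ a₂ s' a'
  | 0, s, a, s', a' => by simp [jointDist, ite_and]
  | j + 1, s, a, s', a' => by
    rw [← add_assoc]
    simp only [jointDist, jointDist_add m j, sum_mul, mul_sum, mul_assoc]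
    exact sum_sum_sum_sum_comm ..

theorem jointDist_succ (hpol₁ : ∀ s, ∑ a, pol s a = 1) (k : ℕ) (s : S) (a : A) (s' : S)
    (a' : A) : jointDist P pol (k + 1) s a s' a' = stateDist P pol (k + 1) s a s' * pol s' a' := by
  simp only [stateDist, jointDist, ← mul_sum, hpol₁, mul_one]

/-- `E[g(S_k, A_k) | S_0 = s, A_0 = a]`. -/
def stepExpectation (P : S → A → S → ℝ) (pol : S → A → ℝ) (k : ℕ) (g : S → A → ℝ)
    (s : S) (a : A) : ℝ :=
  ∑ s', ∑ a', jointDist P pol k s a s' a' * g s' a'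

theorem stepExpectation_zero (g : S → A → ℝ) (s : S) (a : A) :
    stepExpectation P pol 0 g s a = g s a := by
  simp [stepExpectation, jointDist, ite_and]

theorem stepExpectation_add (m i : ℕ) (g : S → A → ℝ) (s : S) (a : A) :
    stepExpectation P pol (m + i) g s a
      = stepExpectation P pol m (stepExpectation P pol i g) s a := by
  simp only [stepExpectation, jointDist_add, sum_mul, mul_sum, mul_assoc]
  exact sum_sum_sum_sum_comm ..

theorem stepExpectation_succ (hpol₁ : ∀ s, ∑ a, pol s a = 1) (k : ℕ) (g : S → A → ℝ)
    (s : S) (a : A) :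
    stepExpectation P pol (k + 1) g s a
      = ∑ s', stateDist P pol (k + 1) s a s' * ∑ a', pol s' a' * g s' a' := by
  simp only [stepExpectation, jointDist_succ hpol₁, mul_sum, mul_assoc]

theorem stepExpectation_const_mul (k : ℕ) (c : ℝ) (g : S → A → ℝ) (s : S) (a : A) :
    stepExpectation P pol k (fun s' a' => c * g s' a') s a
      = c * stepExpectation P pol k g s a := by
  simp only [stepExpectation, mul_sum]
  exact sum_congr rfl fun _ _ => sum_congr rfl fun _ _ => by ring

theorem stepExpectation_tsum {h : ℕ → S → A → ℝ} (hh : ∀ s a, Summable fun i => h i s a)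
    (k : ℕ) (s : S) (a : A) :
    stepExpectation P pol k (fun s' a' => ∑' i, h i s' a') s a
      = ∑' i, stepExpectation P pol k (h i) s a := by
  simp only [stepExpectation]
  rw [Summable.tsum_finsetSum fun s' _ => summable_sum fun a' _ => (hh s' a').mul_left _]
  refine sum_congr rfl fun s' _ => ?_
  rw [Summable.tsum_finsetSum fun a' _ => (hh s' a').mul_left _]
  simp only [tsum_mul_left]

theorem abs_stepExpectation_le (hP₀ : ∀ s a s', 0 ≤ P s a s')
    (hP₁ : ∀ s a, ∑ s', P s a s' = 1) (hpol₀ : ∀ s a, 0 ≤ pol s a)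
    (hpol₁ : ∀ s, ∑ a, pol s a = 1) (k : ℕ) (g : S → A → ℝ) (s : S) (a : A) :
    |stepExpectation P pol k g s a| ≤ ∑ s', ∑ a', |g s' a'| := by
  set C := ∑ s', ∑ a', |g s' a'|
  have hg : ∀ s' a', |g s' a'| ≤ C := fun s' a' =>
    (single_le_sum (f := fun a' => |g s' a'|) (fun _ _ => abs_nonneg _) (mem_univ a')).trans
      (single_le_sum (f := fun s' => ∑ a', |g s' a'|)
        (fun _ _ => sum_nonneg fun _ _ => abs_nonneg _) (mem_univ s'))
  calc |stepExpectation P pol k g s a|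
      ≤ ∑ s', ∑ a', jointDist P pol k s a s' a' * |g s' a'| := by
        refine (abs_sum_le_sum_abs _ _).trans (sum_le_sum fun s' _ => ?_)
        refine (abs_sum_le_sum_abs _ _).trans_eq (sum_congr rfl fun a' _ => ?_)
        rw [abs_mul, abs_of_nonneg (jointDist_nonneg hP₀ hpol₀ ..)]
    _ ≤ ∑ s', ∑ a', jointDist P pol k s a s' a' * C :=
        sum_le_sum fun s' _ => sum_le_sum fun a' _ =>
          mul_le_mul_of_nonneg_left (hg s' a') (jointDist_nonneg hP₀ hpol₀ ..)
    _ = C := by simp only [← sum_mul, sum_jointDist hP₁ hpol₁, one_mul]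

end Kernel

section Value

variable [Fintype S] [Fintype A] [Fintype R] {P : S → A → S → ℝ} {pol : S → A → ℝ}
  {γ : ℝ}

theorem summable_pow_mul_stepExpectation (hγ₀ : 0 ≤ γ) (hγ₁ : γ < 1)
    (hP₀ : ∀ s a s', 0 ≤ P s a s') (hP₁ : ∀ s a, ∑ s', P s a s' = 1)
    (hpol₀ : ∀ s a, 0 ≤ pol s a) (hpol₁ : ∀ s, ∑ a, pol s a = 1)
    (g : S → A → ℝ) (s : S) (a : A) :
    Summable fun k => γ ^ k * stepExpectation P pol k g s a := by
  refine .of_norm_bounded ((summable_geometric_of_lt_one hγ₀ hγ₁).mul_right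
    (∑ s', ∑ a', |g s' a'|)) fun k => ?_
  rw [norm_mul, norm_pow, Real.norm_eq_abs, Real.norm_eq_abs, abs_of_nonneg hγ₀]
  exact mul_le_mul_of_nonneg_left (abs_stepExpectation_le hP₀ hP₁ hpol₀ hpol₁ ..)
    (pow_nonneg hγ₀ k)

theorem Qval_eq_sum_range_add_stepExpectation (hγ₀ : 0 ≤ γ) (hγ₁ : γ < 1)
    (hP₀ : ∀ s a s', 0 ≤ P s a s') (hP₁ : ∀ s a, ∑ s', P s a s' = 1)
    (hpol₀ : ∀ s a, 0 ≤ pol s a) (hpol₁ : ∀ s, ∑ a, pol s a = 1)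
    (pr : S → A → R → ℝ) (ρ : R → ℝ) (n : ℕ) (s : S) (a : A) :
    Qval P pol pr ρ γ s a
      = ∑ k ∈ range n, γ ^ k * stepExpectation P pol k (rexp pr ρ) s a
        + γ ^ n * stepExpectation P pol n (Qval P pol pr ρ γ) s a := by
  have hs := summable_pow_mul_stepExpectation hγ₀ hγ₁ hP₀ hP₁ hpol₀ hpol₁ (rexp pr ρ)
  have hQ : Qval P pol pr ρ γ
      = fun s a => ∑' k, γ ^ k * stepExpectation P pol k (rexp pr ρ) s a := rfl
  rw [hQ]
  beta_reduce
  rw [← (hs s a).sum_add_tsum_nat_add n, stepExpectation_tsum hs, ← tsum_mul_left]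
  congr 2 with i
  rw [add_comm i n, stepExpectation_add, stepExpectation_const_mul, pow_add]
  ring

theorem Qval_eq_rexp_add_sum_Icc_add_stateDist (hγ₀ : 0 ≤ γ) (hγ₁ : γ < 1)
    (hP₀ : ∀ s a s', 0 ≤ P s a s') (hP₁ : ∀ s a, ∑ s', P s a s' = 1)
    (hpol₀ : ∀ s a, 0 ≤ pol s a) (hpol₁ : ∀ s, ∑ a, pol s a = 1)
    (pr : S → A → R → ℝ) (ρ : R → ℝ) {n : ℕ} (hn : n ≠ 0) (s : S) (a : A) :
    Qval P pol pr ρ γ s a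
      = rexp pr ρ s a + ∑ k ∈ Icc 1 (n - 1), γ ^ k * stepExpectation P pol k (rexp pr ρ) s a
        + γ ^ n * ∑ s', stateDist P pol n s a s' * Vval P pol pr ρ γ s' := by
  obtain ⟨m, rfl⟩ : ∃ m, n = m + 1 := ⟨n - 1, by omega⟩
  rw [Qval_eq_sum_range_add_stepExpectation hγ₀ hγ₁ hP₀ hP₁ hpol₀ hpol₁,
    stepExpectation_succ hpol₁, Nat.range_succ_eq_Icc_zero,
    ← insert_Icc_add_one_left_eq_Icc m.zero_le, sum_insert (by simp), stepExpectation_zero]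
  simp [Vval]

end Value

/-- `U = f(X)` is fully predictive of the reward `ρ(X)` under `p`, with `r(u) = rU u`. -/
def FullyPredictive {X υ : Type*} [Fintype X] (p : X → ℝ) (f : X → υ) (ρ : X → ℝ)
    (rU : υ → ℝ) : Prop :=
  ∀ u, 0 < ∑ x ∈ univ.filter (fun x => f x = u), p x →
    ∑ x ∈ univ.filter (fun x => f x = u), p x * ρ x
      = rU u * ∑ x ∈ univ.filter (fun x => f x = u), p x

theorem FullyPredictive.sum_mul_comp_mul {X υ : Type*} [Fintype X] {p : X → ℝ} {f : X → υ}
    {ρ : X → ℝ} {rU : υ → ℝ} (hf : FullyPredictive p f ρ rU) (hp : ∀ x, 0 ≤ p x)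
    {T : Finset υ} (hT : ∀ x, f x ∈ T) (w : υ → ℝ) :
    ∑ x, p x * (w (f x) * ρ x)
      = ∑ u ∈ T, (∑ x ∈ univ.filter (fun x => f x = u), p x) * (w u * rU u) := by
  rw [← sum_fiberwise_of_maps_to fun x _ => hT x]
  refine sum_congr rfl fun u _ => ?_
  have hfiber : ∑ x ∈ univ.filter (fun x => f x = u), p x * (w (f x) * ρ x)
      = w u * ∑ x ∈ univ.filter (fun x => f x = u), p x * ρ x := by
    rw [mul_sum]
    exact sum_congr rfl fun x hx => by rw [(mem_filter.mp hx).2]; ring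
  rw [hfiber]
  rcases (sum_nonneg fun x _ => hp x :
      0 ≤ ∑ x ∈ univ.filter (fun x => f x = u), p x).lt_or_eq with hpos | hzero
  · rw [hf u hpos]; ring
  · have hp0 : ∀ x ∈ univ.filter (fun x => f x = u), p x = 0 :=
      (sum_eq_zero_iff_of_nonneg fun x _ => hp x).mp hzero.symm
    rw [← hzero, sum_eq_zero fun x hx => by rw [hp0 x hx, zero_mul]]
    ring

/-- `w_{n,γ}(s, a, u)` with the steps `1, …, n - 1` replaced by an arbitrary set `K`. -/
def outcomeContribution {υ : Type*} [Fintype S] [Fintype A] [Fintype R] (P : S → A → S → ℝ)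
    (pol : S → A → ℝ) (pr : S → A → R → ℝ) (f : S → A → R → υ) (γ : ℝ) (K : Finset ℕ)
    (s : S) (a : A) (u : υ) : ℝ :=
  (∑ k ∈ K, γ ^ k * outcomeDist P pol pr f k s a u)
    / (∑ k ∈ K, γ ^ k * ∑ a0 : A, pol s a0 * outcomeDist P pol pr f k s a0 u) - 1

/-- `w_n(s, a, s')`. -/
def stateContribution [Fintype S] [Fintype A] (P : S → A → S → ℝ) (pol : S → A → ℝ) (n : ℕ)
    (s : S) (a : A) (s' : S) : ℝ :=
  stateDist P pol n s a s' / (∑ a0 : A, pol s a0 * stateDist P pol n s a0 s') - 1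

section Contribution

variable [Fintype S] [Fintype A] {P : S → A → S → ℝ} {pol : S → A → ℝ}

theorem sum_pol_mul_stateContribution (hP₀ : ∀ s a s', 0 ≤ P s a s')
    (hpol₀ : ∀ s a, 0 ≤ pol s a) {s : S} {a : A} (hpos : 0 < pol s a) (n : ℕ) (g : S → ℝ) :
    ∑ a0, pol s a0 * ∑ s', stateDist P pol n s a0 s' * (stateContribution P pol n s a s' * g s')
      = ∑ s', stateDist P pol n s a s' * g s'
        - ∑ a0, pol s a0 * ∑ s', stateDist P pol n s a0 s' * g s' :=
  sum_mul_sum_mul_div_sub_one_mul g (mem_univ a) hpos (fun j _ => hpol₀ s j)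
    (fun _ _ _ _ => stateDist_nonneg hP₀ hpol₀ ..) fun _ _ => rfl

variable [Fintype R] {pr : S → A → R → ℝ} {ρ : R → ℝ} {υ : Type*} {f : S → A → R → υ}
  {rU : υ → ℝ} {T : Finset υ}

theorem outcomeDist_nonneg (hP₀ : ∀ s a s', 0 ≤ P s a s') (hpol₀ : ∀ s a, 0 ≤ pol s a)
    (hpr₀ : ∀ s a x, 0 ≤ pr s a x) (k : ℕ) (s : S) (a : A) (u : υ) :
    0 ≤ outcomeDist P pol pr f k s a u :=
  sum_nonneg fun _ _ => sum_nonneg fun _ _ => sum_nonneg fun _ _ => by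
    split_ifs
    exacts [mul_nonneg (jointDist_nonneg hP₀ hpol₀ ..) (hpr₀ ..), le_rfl]

theorem sum_jointDist_mul_eq_sum_outcomeDist (hpr₀ : ∀ s a x, 0 ≤ pr s a x)
    (hf : ∀ s a, FullyPredictive (pr s a) (f s a) ρ rU) (hT : ∀ s a x, f s a x ∈ T)
    (w : υ → ℝ) (k : ℕ) (s : S) (a : A) :
    ∑ s', ∑ a', ∑ x, jointDist P pol k s a s' a' * pr s' a' x * (w (f s' a' x) * ρ x)
      = ∑ u ∈ T, outcomeDist P pol pr f k s a u * (w u * rU u) := by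
  have hod (u : υ) : outcomeDist P pol pr f k s a u
      = ∑ s', ∑ a', jointDist P pol k s a s' a' * ∑ x ∈ univ.filter (fun x => f s' a' x = u),
          pr s' a' x := by
    simp only [outcomeDist, sum_filter, mul_sum, mul_ite, mul_zero]
  simp only [mul_assoc, ← mul_sum, (hf _ _).sum_mul_comp_mul (hpr₀ _ _) (hT _ _), hod, sum_mul]
  simp only [mul_sum]
  exact (sum_congr rfl fun _ _ => sum_comm).trans sum_comm

theorem stepExpectation_rexp_eq_sum_outcomeDist (hpr₀ : ∀ s a x, 0 ≤ pr s a x)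
    (hf : ∀ s a, FullyPredictive (pr s a) (f s a) ρ rU) (hT : ∀ s a x, f s a x ∈ T)
    (k : ℕ) (s : S) (a : A) :
    stepExpectation P pol k (rexp pr ρ) s a
      = ∑ u ∈ T, outcomeDist P pol pr f k s a u * rU u := by
  have h := sum_jointDist_mul_eq_sum_outcomeDist (P := P) (pol := pol) hpr₀ hf hT 1 k s a
  simp only [Pi.one_apply, one_mul] at h
  rw [← h]
  simp only [stepExpectation, rexp, mul_sum, mul_assoc]

theorem sum_pol_mul_outcomeContribution (hP₀ : ∀ s a s', 0 ≤ P s a s')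
    (hpol₀ : ∀ s a, 0 ≤ pol s a) (hpr₀ : ∀ s a x, 0 ≤ pr s a x)
    (hf : ∀ s a, FullyPredictive (pr s a) (f s a) ρ rU) (hT : ∀ s a x, f s a x ∈ T)
    {γ : ℝ} (hγ₀ : 0 ≤ γ) {s : S} {a : A} (hpos : 0 < pol s a) (K : Finset ℕ) :
    ∑ a0, pol s a0 * ∑ k ∈ K, γ ^ k * ∑ s', ∑ a', ∑ x,
        jointDist P pol k s a0 s' a' * pr s' a' x
          * (outcomeContribution P pol pr f γ K s a (f s' a' x) * ρ x)
      = ∑ k ∈ K, γ ^ k * stepExpectation P pol k (rexp pr ρ) s a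
        - ∑ a0, pol s a0 * ∑ k ∈ K, γ ^ k * stepExpectation P pol k (rexp pr ρ) s a0 := by
  have hswap (a0 : A) (c : υ → ℝ) :
      ∑ k ∈ K, γ ^ k * ∑ u ∈ T, outcomeDist P pol pr f k s a0 u * c u
        = ∑ u ∈ T, (∑ k ∈ K, γ ^ k * outcomeDist P pol pr f k s a0 u) * c u := by
    simp only [mul_sum, sum_mul, mul_assoc]
    exact sum_comm
  simp only [sum_jointDist_mul_eq_sum_outcomeDist hpr₀ hf hT,
    stepExpectation_rexp_eq_sum_outcomeDist hpr₀ hf hT, hswap]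
  refine sum_mul_sum_mul_div_sub_one_mul rU (mem_univ a) hpos (fun j _ => hpol₀ s j)
    (fun j _ u _ => sum_nonneg fun k _ =>
      mul_nonneg (pow_nonneg hγ₀ k) (outcomeDist_nonneg hP₀ hpol₀ hpr₀ ..)) fun u _ => ?_
  simp only [mul_sum]
  exact sum_comm.trans (sum_congr rfl fun _ _ => sum_congr rfl fun _ _ => by ring)

end Contribution

theorem nstep_cocoa_advantage_general
    {υ : Type*} [Fintype S] [Fintype A] [Fintype R]
    (P : S → A → S → ℝ) (pol : S → A → ℝ) (pr : S → A → R → ℝ) (ρ : R → ℝ)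
    (f : S → A → R → υ) (rU : υ → ℝ)
    (γ : ℝ) (hγ : γ ∈ Set.Ioo (0 : ℝ) 1) (n : ℕ) (hn : 2 ≤ n)
    (hPn : ∀ s a s', 0 ≤ P s a s') (hPs : ∀ s a, ∑ s', P s a s' = 1)
    (hprn : ∀ s a x, 0 ≤ pr s a x)
    (hpoln : ∀ s a, 0 < pol s a) (hpols : ∀ s, ∑ a, pol s a = 1)
    -- `U = f(S, A, R)` is fully predictive of the reward: `E[R | S, A, U = u] = rU u`.
    (hfp : ∀ (s : S) (a : A) (u : υ),
      0 < ∑ x ∈ Finset.univ.filter (fun x => f s a x = u), pr s a x →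
      (∑ x ∈ Finset.univ.filter (fun x => f s a x = u), pr s a x * ρ x)
        = rU u * ∑ x ∈ Finset.univ.filter (fun x => f s a x = u), pr s a x)
    (s : S) (a : A) :
    letI wU : υ → ℝ := fun u =>
      (∑ k ∈ Finset.Icc 1 (n - 1), γ ^ k * outcomeDist P pol pr f k s a u)
        / (∑ k ∈ Finset.Icc 1 (n - 1), γ ^ k *
            ∑ a0 : A, pol s a0 * outcomeDist P pol pr f k s a0 u) - 1
    letI wS : S → ℝ := fun s' =>
      stateDist P pol n s a s'
        / (∑ a0 : A, pol s a0 * stateDist P pol n s a0 s') - 1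
    Qval P pol pr ρ γ s a - Vval P pol pr ρ γ s
      = rexp pr ρ s a - (∑ a' : A, pol s a' * rexp pr ρ s a')
        + ∑ a0 : A, pol s a0 *
            ((∑ k ∈ Finset.Icc 1 (n - 1), γ ^ k *
                ∑ s' : S, ∑ a' : A, ∑ x : R,
                  jointDist P pol k s a0 s' a' * pr s' a' x * (wU (f s' a' x) * ρ x))
              + γ ^ n * ∑ s' : S,
                  stateDist P pol n s a0 s' * (wS s' * Vval P pol pr ρ γ s')) := by
  have hpol₀ : ∀ s a, 0 ≤ pol s a := fun s a => (hpoln s a).le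
  have hQ := Qval_eq_rexp_add_sum_Icc_add_stateDist hγ.1.le hγ.2 hPn hPs hpol₀ hpols pr ρ
    (show n ≠ 0 by omega) s
  have hT (s : S) (a : A) (x : R) : f s a x ∈ univ.image fun y : S × A × R => f y.1 y.2.1 y.2.2 :=
    mem_image_of_mem _ (mem_univ (s, a, x))
  have hOutcome := sum_pol_mul_outcomeContribution hPn hpol₀ hprn hfp hT hγ.1.le (hpoln s a)
    (Icc 1 (n - 1))
  have hState := sum_pol_mul_stateContribution hPn hpol₀ (hpoln s a) n (Vval P pol pr ρ γ)
  simp only [outcomeContribution, stateContribution] at hOutcome hState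
  beta_reduce
  rw [Vval]
  simp only [hQ, mul_add, sum_add_distrib, mul_left_comm _ (γ ^ n), ← mul_sum, hOutcome, hState]
  ring

/-- n-step bootstrapped hindsight advantage decomposition. With
`w_{n,γ}(s,a,u)` the discounted (steps `1..n-1`) contribution coefficient on rewarding
outcomes and `w_n(s,a,s')` the `n`-step state contribution coefficient,
`A^π(s,a) = r(s,a) - ∑_{a'} π(a'|s) r(s,a')
  + E_{τ(s,π)}[∑_{k=1}^{n-1} γ^k w_{n,γ}(s,a,U_k) R_k + γ^n w_n(s,a,S_n) V^π(S_n)]`. -/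
theorem nstep_cocoa_advantage
    {υ : Type*} [Fintype S] [Fintype A] [Fintype R]
    (P : S → A → S → ℝ) (pol : S → A → ℝ) (pr : S → A → R → ℝ) (ρ : R → ℝ)
    (f : S → A → R → υ) (rU : υ → ℝ)
    (γ : ℝ) (hγ : γ ∈ Set.Ioo (0 : ℝ) 1) (n : ℕ) (hn : 2 ≤ n)
    (hPn : ∀ s a s', 0 ≤ P s a s') (hPs : ∀ s a, ∑ s', P s a s' = 1)
    (hprn : ∀ s a x, 0 ≤ pr s a x) (hprs : ∀ s a, ∑ x, pr s a x = 1)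
    (hpoln : ∀ s a, 0 < pol s a) (hpols : ∀ s, ∑ a, pol s a = 1)
    -- `U = f(S, A, R)` is fully predictive of the reward: `E[R | S, A, U = u] = rU u`.
    (hfp : ∀ (s : S) (a : A) (u : υ),
      0 < ∑ x ∈ Finset.univ.filter (fun x => f s a x = u), pr s a x →
      (∑ x ∈ Finset.univ.filter (fun x => f s a x = u), pr s a x * ρ x)
        = rU u * ∑ x ∈ Finset.univ.filter (fun x => f s a x = u), pr s a x)
    (s : S) (a : A) :
    letI wU : υ → ℝ := fun u =>
      (∑ k ∈ Finset.Icc 1 (n - 1), γ ^ k * outcomeDist P pol pr f k s a u)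
        / (∑ k ∈ Finset.Icc 1 (n - 1), γ ^ k *
            ∑ a0 : A, pol s a0 * outcomeDist P pol pr f k s a0 u) - 1
    letI wS : S → ℝ := fun s' =>
      stateDist P pol n s a s'
        / (∑ a0 : A, pol s a0 * stateDist P pol n s a0 s') - 1
    Qval P pol pr ρ γ s a - Vval P pol pr ρ γ s
      = rexp pr ρ s a - (∑ a' : A, pol s a' * rexp pr ρ s a')
        + ∑ a0 : A, pol s a0 *
            ((∑ k ∈ Finset.Icc 1 (n - 1), γ ^ k *
                ∑ s' : S, ∑ a' : A, ∑ x : R,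
                  jointDist P pol k s a0 s' a' * pr s' a' x * (wU (f s' a' x) * ρ x))
              + γ ^ n * ∑ s' : S,
                  stateDist P pol n s a0 s' * (wS s' * Vval P pol pr ρ γ s')) :=
  nstep_cocoa_advantage_general P pol pr ρ f rU γ hγ n hn hPn hPs hprn hpoln hpols hfp s a
end
end
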